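/- Let 𝔥 = ⊕_{i∈I} 𝔥^i be a connected Hoffman graph with each 𝔥^i ∈ 𝔒 (i.e., each 𝔥^i is either 𝔥₂, the Hoffman graph with one slim vertex adjacent to two fat vertices, or an indecomposable fat Hoffman graph with at least two slim vertices and exactly one fat vertex). If 𝔥 is not isomorphic to 𝔥₂, then the only automorphism of 𝔥 fixing all slim vertices is the identity: Aut*(𝔥) = {id}. -/

import Mathlib

/-- A Hoffman graph: a finite simple graph with vertices labeled slim or fat,
fat vertices pairwise non-adjacent, each fat vertex with a slim neighbor. -/
structure HoffmanGraph (V : Type) where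
  adj : V → V → Prop
  symm : Symmetric adj
  irrefl : Irreflexive adj
  slim : V → Prop
  fat_slim_nbr : ∀ x, ¬ slim x → ∃ y, slim y ∧ adj x y
  fat_not_adj : ∀ x y, ¬ slim x → ¬ slim y → ¬ adj x y

namespace HoffmanGraph

variable {V W U : Type}

def slimSet (H : HoffmanGraph V) : Set V := {x | H.slim x}

def toSimple (H : HoffmanGraph V) : SimpleGraph V where
  Adj := H.adj
  symm := by refine ⟨?_⟩; intros; apply H.symm; assumption
  loopless := by refine ⟨?_⟩; intros; apply H.irrefl

/-- common fat neighbours of `x` and `y` within the carrier set `S`. -/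
def fatCommonOn (H : HoffmanGraph V) (S : Set V) (x y : V) : Set V :=
  {z | z ∈ S ∧ ¬ H.slim z ∧ H.adj x z ∧ H.adj y z}

/-- The induced Hoffman subgraph of `H` on `S` is the sum of the induced subgraphs
on the sets `P i`. -/
def IsSumOn (H : HoffmanGraph V) (S : Set V) {ι : Type} (P : ι → Set V) : Prop :=
  (∀ i, P i ⊆ S) ∧
  (⋃ i, P i) = S ∧
  (∀ x ∈ S, H.slim x → ∃! i, x ∈ P i) ∧
  (∀ i, ∀ x ∈ P i, H.slim x → ∀ z ∈ S, ¬ H.slim z → H.adj x z → z ∈ P i) ∧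
  (∀ i, ∀ z ∈ P i, ¬ H.slim z → ∃ x ∈ P i, H.slim x ∧ H.adj z x) ∧
  (∀ i j, i ≠ j → ∀ x ∈ P i, ∀ y ∈ P j, H.slim x → H.slim y →
    (H.fatCommonOn S x y).ncard ≤ 1 ∧ ((H.fatCommonOn S x y).ncard = 1 ↔ H.adj x y))

/-- Binary sum. -/
def IsSumOn2 (H : HoffmanGraph V) (S A B : Set V) : Prop :=
  H.IsSumOn S (fun b : Bool => if b then A else B)

/-- The induced Hoffman subgraph on `S` is non-empty and not a sum of two non-empty
Hoffman subgraphs. -/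
def Indecomposable (H : HoffmanGraph V) (S : Set V) : Prop :=
  S.Nonempty ∧ ∀ A B : Set V, A.Nonempty → B.Nonempty → ¬ H.IsSumOn2 S A B

/-- `⟪X⟫`: `X` together with the fat neighbours (inside the carrier `S`) of its members. -/
def hind (H : HoffmanGraph V) (S X : Set V) : Set V :=
  X ∪ {z | z ∈ S ∧ ¬ H.slim z ∧ ∃ x ∈ X, H.adj x z}

/-- `e` is an isomorphism of Hoffman graphs. -/
def IsIso (H : HoffmanGraph V) (K : HoffmanGraph W) (e : V ≃ W) : Prop :=
  (∀ x y, H.adj x y ↔ K.adj (e x) (e y)) ∧ ∀ x, (H.slim x ↔ K.slim (e x))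

/-- `K` is isomorphic to the induced Hoffman subgraph of `L` on `S`. -/
def IsoToInduced (K : HoffmanGraph W) (L : HoffmanGraph U) (S : Set U) : Prop :=
  ∃ e : W ≃ S, (∀ x y, K.adj x y ↔ L.adj (e x).1 (e y).1) ∧ ∀ x, (K.slim x ↔ L.slim (e x).1)

/-- `K` is isomorphic to an induced Hoffman subgraph of `L`. -/
def IsSubgraphOf (K : HoffmanGraph W) (L : HoffmanGraph U) : Prop :=
  ∃ S : Set U, IsoToInduced K L S

/-- The induced Hoffman subgraph on `S` is (isomorphic to) `𝔥₂`:
one slim vertex adjacent to two fat vertices. -/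
def IsH2On (H : HoffmanGraph V) (S : Set V) : Prop :=
  ∃ s f₁ f₂ : V, f₁ ≠ f₂ ∧ S = {s, f₁, f₂} ∧ H.slim s ∧ ¬ H.slim f₁ ∧ ¬ H.slim f₂ ∧
    H.adj s f₁ ∧ H.adj s f₂

/-- The induced Hoffman subgraph on `S` belongs to the family `𝔒`: it is `𝔥₂` or an
indecomposable fat Hoffman graph with at least 2 slim vertices and exactly one fat vertex. -/
def MemO (H : HoffmanGraph V) (S : Set V) : Prop :=
  H.IsH2On S ∨
  (H.Indecomposable S ∧ 2 ≤ (S ∩ H.slimSet).ncard ∧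
    ∃ w ∈ S, ¬ H.slim w ∧ (∀ z ∈ S, ¬ H.slim z → z = w) ∧ ∀ x ∈ S, H.slim x → H.adj x w)

/-- The induced Hoffman subgraph of `L` on `S` is isomorphic to a member of the family `ℋ`. -/
def MemFam (ℋ : ∀ W : Type, HoffmanGraph W → Prop) (L : HoffmanGraph U) (S : Set U) : Prop :=
  ∃ (W : Type) (K : HoffmanGraph W), ℋ W K ∧ IsoToInduced K L S

/-- `K` is a sum of members of `ℋ`. -/
def IsCoverGraph (ℋ : ∀ W : Type, HoffmanGraph W → Prop) (K : HoffmanGraph U) : Prop :=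
  ∃ (n : ℕ) (P : Fin n → Set U), K.IsSumOn Set.univ P ∧ ∀ i, MemFam ℋ K (P i)

/-- `G` is a slim `ℋ`-line graph. -/
def IsSlimLine (ℋ : ∀ W : Type, HoffmanGraph W → Prop) {V : Type} (G : SimpleGraph V) : Prop :=
  ∃ (U : Type) (K : HoffmanGraph U) (ι : V → U), Finite U ∧ Function.Injective ι ∧
    (∀ a, K.slim (ι a)) ∧ (∀ a b, G.Adj a b ↔ K.adj (ι a) (ι b)) ∧ IsCoverGraph ℋ K

/-- `K` (with slim vertices identified with `V(G)` via `ι`) is a strict `ℋ`-cover of `G`. -/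
def IsStrictCover (ℋ : ∀ W : Type, HoffmanGraph W → Prop) {V U : Type}
    (G : SimpleGraph V) (K : HoffmanGraph U) (ι : V → U) : Prop :=
  Finite U ∧ Function.Injective ι ∧ (∀ a b, G.Adj a b ↔ K.adj (ι a) (ι b)) ∧
  (∀ u, K.slim u ↔ ∃ a, ι a = u) ∧ IsCoverGraph ℋ K

/-- Two strict covers are equivalent: an isomorphism restricting to the identity on `G`. -/
def EquivCovers {V U U' : Type} (K : HoffmanGraph U) (ι : V → U)
    (K' : HoffmanGraph U') (ι' : V → U') : Prop :=
  ∃ φ : U ≃ U', IsIso K K' φ ∧ ∀ a, φ (ι a) = ι' a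

/-- The family `ℋ̄ = {𝔥₂} ∪ {𝔤 ∈ 𝔒 : 𝔤 is a Hoffman subgraph of a member of ℋ}`. -/
def BarFam (ℋ : ∀ W : Type, HoffmanGraph W → Prop) : ∀ W : Type, HoffmanGraph W → Prop :=
  fun _ K => K.IsH2On Set.univ ∨
    (K.MemO Set.univ ∧ ∃ (U : Type) (L : HoffmanGraph U), ℋ U L ∧ IsSubgraphOf K L)

/-- `G` has a strict `ℱ`-cover and it is unique up to equivalence. -/
def UniqueStrictCover (ℱ : ∀ W : Type, HoffmanGraph W → Prop) {V : Type}
    (G : SimpleGraph V) : Prop :=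
  (∃ (U : Type) (K : HoffmanGraph U) (ι : V → U), IsStrictCover ℱ G K ι) ∧
  ∀ (U U' : Type) (K : HoffmanGraph U) (K' : HoffmanGraph U') (ι : V → U) (ι' : V → U'),
    IsStrictCover ℱ G K ι → IsStrictCover ℱ G K' ι' → EquivCovers K ι K' ι'

end HoffmanGraph
open HoffmanGraph in
/-- For a connected sum of members of `𝔒` not isomorphic to `𝔥₂`, the only automorphism
fixing all slim vertices is the identity. -/
theorem stmt12 {V : Type} [Fintype V] (H : HoffmanGraph V) {ι : Type} (P : ι → Set V)
    (hsum : H.IsSumOn Set.univ P) (hO : ∀ i, H.MemO (P i))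
    (hconn : H.toSimple.Connected)
    (hnotH2 : ¬ H.IsH2On Set.univ)
    (ψ : V ≃ V) (hψ : IsIso H H ψ) (hfix : ∀ x, H.slim x → ψ x = x) :
    ∀ x, ψ x = x := by
  obtain ⟨hsub, hcov, huniq, hfatin, -, hpair⟩ := hsum
  intro x
  by_contra hx
  have hxf : ¬ H.slim x := fun h => hx (hfix x h)
  set g := ψ x with hg
  have hne : x ≠ g := fun h => hx h.symm
  have hgf : ¬ H.slim g := fun h => hxf ((hψ.2 x).mpr h)
  -- x and g have the same slim neighbourhood
  have hN : ∀ y, H.slim y → (H.adj y x ↔ H.adj y g) := by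
    intro y hy
    have := hψ.1 y x
    rwa [hfix y hy] at this
  obtain ⟨s, hs_slim, hxs⟩ := H.fat_slim_nbr x hxf
  obtain ⟨i, hsi, -⟩ := huniq s (Set.mem_univ s) hs_slim
  have hxi : x ∈ P i := hfatin i s hsi hs_slim x (Set.mem_univ x) hxf (H.symm hxs)
  have hsg : H.adj s g := (hN s hs_slim).mp (H.symm hxs)
  have hgi : g ∈ P i := hfatin i s hsi hs_slim g (Set.mem_univ g) hgf hsg
  rcases hO i with hH2 | ⟨-, -, w, hw, hwfat, hwuniq, -⟩
  swap
  · exact hne ((hwuniq x hxi hxf).trans (hwuniq g hgi hgf).symm)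
  obtain ⟨s', f₁, f₂, hf12, hPeq, hs'slim, hf1, hf2, hadj1, hadj2⟩ := hH2
  -- s = s', and P i = {s, x, g}
  have hss' : s = s' := by
    rw [hPeq] at hsi
    rcases hsi with h | h | h
    · exact h
    · exact absurd (h ▸ hs_slim) hf1
    · exact absurd (h ▸ hs_slim) hf2
  have hPi : P i = {s, x, g} := by
    rw [hPeq] at hxi hgi
    rcases hxi with h | h | h
    · exact absurd (h ▸ hxf) (fun h' => h' hs'slim)
    all_goals rcases hgi with h' | h' | h'
    · exact absurd (h' ▸ hgf) (fun h'' => h'' hs'slim)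
    · exact absurd (h ▸ h' ▸ rfl) hne
    · rw [hPeq, hss', h, h']
    · exact absurd (h' ▸ hgf) (fun h'' => h'' hs'slim)
    · rw [hPeq, hss', h, h']
      ext a; simp only [Set.mem_insert_iff, Set.mem_singleton_iff]; tauto
    · exact absurd (h ▸ h' ▸ rfl) hne
  -- slim neighbours of x (and of g) are only s
  have keyA : ∀ y, H.slim y → H.adj x y → y = s := by
    intro y hy hxy
    obtain ⟨j, hyj, -⟩ := huniq y (Set.mem_univ y) hy
    rcases eq_or_ne j i with rfl | hji
    · rw [hPi] at hyj
      rcases hyj with h | h | h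
      · exact h
      · exact absurd (h ▸ hy) hxf
      · exact absurd (h ▸ hy) hgf
    · exfalso
      have hle := (hpair i j (Ne.symm hji) s hsi y hyj hs_slim hy).1
      have hsubs : ({x, g} : Set V) ⊆ H.fatCommonOn Set.univ s y := by
        rintro z (rfl | rfl)
        · exact ⟨Set.mem_univ _, hxf, H.symm hxs, H.symm hxy⟩
        · exact ⟨Set.mem_univ _, hgf, hsg, (hN y hy).mp (H.symm hxy)⟩
      have h2 : 2 ≤ (H.fatCommonOn Set.univ s y).ncard := by
        calc 2 = ({x, g} : Set V).ncard := (Set.ncard_pair hne).symm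
        _ ≤ _ := Set.ncard_le_ncard hsubs (Set.toFinite _)
      omega
  have keyA' : ∀ y, H.slim y → H.adj g y → y = s := by
    intro y hy hgy
    exact keyA y hy (H.symm ((hN y hy).mpr (H.symm hgy)))
  -- neighbours of s are only x and g
  have keyB : ∀ y, H.adj s y → y = x ∨ y = g := by
    intro y hsy
    by_cases hy : H.slim y
    · exfalso
      obtain ⟨j, hyj, -⟩ := huniq y (Set.mem_univ y) hy
      rcases eq_or_ne j i with rfl | hji
      · rw [hPi] at hyj
        rcases hyj with h | h | h
        · exact H.irrefl s (h ▸ hsy)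
        · exact hxf (h ▸ hy)
        · exact hgf (h ▸ hy)
      · have hcard := ((hpair i j (Ne.symm hji) s hsi y hyj hs_slim hy).2).mpr hsy
        obtain ⟨z, hz⟩ := Set.ncard_eq_one.mp hcard
        have hzmem : z ∈ H.fatCommonOn Set.univ s y := by rw [hz]; rfl
        obtain ⟨-, hzfat, hsz, hyz⟩ := hzmem
        have hzi : z ∈ P i := hfatin i s hsi hs_slim z (Set.mem_univ z) hzfat hsz
        rw [hPi] at hzi
        rcases hzi with h | h | h
        · exact hzfat (h ▸ hs_slim)
        · exact H.irrefl s ((keyA y hy (h ▸ H.symm hyz)) ▸ hsy)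
        · exact H.irrefl s ((keyA' y hy (h ▸ H.symm hyz)) ▸ hsy)
    · have := hfatin i s hsi hs_slim y (Set.mem_univ y) hy hsy
      rw [hPi] at this
      rcases this with h | h | h
      · exact absurd (h ▸ hy) (fun h' => h' hs_slim)
      · exact Or.inl h
      · exact Or.inr h
  -- the set {s, x, g} is closed under adjacency
  have closed : ∀ a ∈ ({s, x, g} : Set V), ∀ b, H.adj a b → b ∈ ({s, x, g} : Set V) := by
    rintro a (ha | ha | ha) b hab
    · rcases keyB b (ha ▸ hab) with rfl | rfl
      · exact Or.inr (Or.inl rfl)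
      · exact Or.inr (Or.inr rfl)
    · by_cases hb : H.slim b
      · exact Or.inl (keyA b hb (ha ▸ hab))
      · exact absurd (ha ▸ hab) (H.fat_not_adj x b hxf hb)
    · by_cases hb : H.slim b
      · exact Or.inl (keyA' b hb (ha ▸ hab))
      · exact absurd (ha ▸ hab) (H.fat_not_adj g b hgf hb)
  have hall : ∀ v, v ∈ ({s, x, g} : Set V) := by
    intro v
    obtain ⟨wlk⟩ := hconn.preconnected s v
    have : ∀ a v (w : H.toSimple.Walk a v), a ∈ ({s, x, g} : Set V) → v ∈ ({s, x, g} : Set V) := by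
      intro a v w
      induction w with
      | nil => exact id
      | cons h p ih => exact fun ha => ih (closed _ ha _ h)
    exact this s v wlk (Or.inl rfl)
  exact hnotH2 ⟨s, x, g, hne, (Set.eq_univ_of_forall hall).symm, hs_slim, hxf, hgf,
    H.symm hxs, hsg⟩
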